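/- Let C ⊂ S^{21} be an antipodal spherical 5-design of cardinality 2816 whose center is the origin, and let ỹ be a unit vector whose inner products with points of C all lie in {±5/6, ±1/2, ±1/6} with frequencies 2γ, 2β, 2α respectively (so α + β + γ = 1408). If γ = 1, then applying the design property to the polynomials t² and t⁴ forces β = 521/5, which is not an integer; hence γ = 1 is impossible. If γ = 0, then necessarily β = 112 and α = 1296. -/

import Mathlib

open scoped BigOperators

/-- The zeroth Gegenbauer coefficient (mean against the measure
`dμ_m(t) ∝ (1-t²)^{(m-3)/2} dt` on `[-1,1]`) of a polynomial `f`, for ambient dimension `m`. -/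
noncomputable def gegMoment (m : ℕ) (f : Polynomial ℝ) : ℝ :=
  (∫ t in (-1:ℝ)..1, f.eval t * (1 - t ^ 2) ^ (((m : ℝ) - 3) / 2)) /
  (∫ t in (-1:ℝ)..1, (1 - t ^ 2) ^ (((m : ℝ) - 3) / 2))

/-- `C` is a spherical `τ`-design in the unit sphere of the finite-dimensional real inner
product space `E`: all points are unit vectors, and for every real polynomial `f` of degree
at most `τ` and every unit vector `x`, `∑_{y ∈ C} f(⟨x,y⟩) = |C| · f₀`. -/
def IsSphericalDesign {E : Type*} [NormedAddCommGroup E] [InnerProductSpace ℝ E]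
    [FiniteDimensional ℝ E] (τ : ℕ) (C : Finset E) : Prop :=
  (∀ y ∈ C, ‖y‖ = 1) ∧
  ∀ f : Polynomial ℝ, f.natDegree ≤ τ → ∀ x : E, ‖x‖ = 1 →
    ∑ y ∈ C, f.eval (inner ℝ x y : ℝ) = (C.card : ℝ) * gegMoment (Module.finrank ℝ E) f


open intervalIntegral

private lemma contRpow {r : ℝ} (hr : 0 ≤ r) : Continuous fun t : ℝ => (1 - t^2) ^ r := by
  have h : Continuous fun x : ℝ => x ^ r := by
    rw [continuous_iff_continuousAt]
    exact fun x => Real.continuousAt_rpow_const x r (Or.inr hr)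
  exact h.comp (by continuity)

private lemma derivRpow {r : ℝ} (hr : 1 ≤ r) (t : ℝ) :
    HasDerivAt (fun t : ℝ => (1 - t^2) ^ r) (r * (1 - t^2) ^ (r - 1) * (-2 * t)) t := by
  have h1 : HasDerivAt (fun t : ℝ => 1 - t^2) (-2 * t) t := by
    simpa using ((hasDerivAt_pow 2 t).const_sub 1)
  exact (Real.hasDerivAt_rpow_const (Or.inr hr)).comp t h1

private lemma rpow_split {t : ℝ} (ht : t ∈ Set.uIcc (-1:ℝ) 1) :
    (1 - t^2) ^ ((21:ℝ)/2) = (1 - t^2) ^ ((19:ℝ)/2) - t^2 * (1 - t^2) ^ ((19:ℝ)/2) := by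
  have ht' : 0 ≤ 1 - t^2 := by
    rw [Set.uIcc_of_le (by norm_num)] at ht
    nlinarith [ht.1, ht.2]
  rcases eq_or_lt_of_le ht' with h | h
  · rw [← h]; rw [Real.zero_rpow (by norm_num), Real.zero_rpow (by norm_num)]; ring
  · have : ((21:ℝ)/2) = 19/2 + 1 := by norm_num
    rw [this, Real.rpow_add_one (ne_of_gt h)]
    ring

noncomputable def Ik (k : ℕ) : ℝ := ∫ t in (-1:ℝ)..1, t^k * (1 - t^2) ^ ((19:ℝ)/2)

private lemma intable (k : ℕ) (r : ℝ) (hr : 0 ≤ r) :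
    IntervalIntegrable (fun t : ℝ => t^k * (1 - t^2) ^ r) MeasureTheory.volume (-1) 1 :=
  ((continuous_pow k).mul (contRpow hr)).intervalIntegrable _ _

private lemma I0_pos : 0 < Ik 0 := by
  apply intervalIntegral_pos_of_pos_on (intable 0 _ (by norm_num)) _ (by norm_num)
  intro x hx
  have : 0 < 1 - x^2 := by nlinarith [hx.1, hx.2]
  simpa using Real.rpow_pos_of_pos this _

private lemma key1 : Ik 0 = 22 * Ik 2 := by
  have hF : ∀ t ∈ Set.uIcc (-1:ℝ) 1, HasDerivAt (fun t : ℝ => t * (1 - t^2) ^ ((21:ℝ)/2))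
      ((1 - t^2) ^ ((21:ℝ)/2) - 21 * (t^2 * (1 - t^2) ^ ((19:ℝ)/2))) t := by
    intro t _
    have := (hasDerivAt_id t).mul (derivRpow (by norm_num : (1:ℝ) ≤ 21/2) t)
    refine this.congr_deriv ?_
    norm_num
    ring
  have hint : IntervalIntegrable (fun t : ℝ => (1 - t^2) ^ ((21:ℝ)/2) - 21 * (t^2 * (1 - t^2) ^ ((19:ℝ)/2))) MeasureTheory.volume (-1) 1 := by
    have h1 := (intable 0 ((21:ℝ)/2) (by norm_num)).sub ((intable 2 ((19:ℝ)/2) (by norm_num)).const_mul 21)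
    simpa using h1
  have h0 := integral_eq_sub_of_hasDerivAt hF hint
  have hz : (∫ t in (-1:ℝ)..1, ((1 - t^2) ^ ((21:ℝ)/2) - 21 * (t^2 * (1 - t^2) ^ ((19:ℝ)/2)))) = 0 := by
    rw [h0]; norm_num
  have hsplit : (∫ t in (-1:ℝ)..1, ((1 - t^2) ^ ((21:ℝ)/2) - 21 * (t^2 * (1 - t^2) ^ ((19:ℝ)/2))))
      = (∫ t in (-1:ℝ)..1, ((1 - t^2) ^ ((19:ℝ)/2) - 22 * (t^2 * (1 - t^2) ^ ((19:ℝ)/2)))) := by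
    apply integral_congr
    intro t ht
    simp only [rpow_split ht]; ring
  rw [hsplit] at hz
  have h2 : (∫ t in (-1:ℝ)..1, ((1 - t^2) ^ ((19:ℝ)/2) - 22 * (t^2 * (1 - t^2) ^ ((19:ℝ)/2))))
      = Ik 0 - 22 * Ik 2 := by
    rw [integral_sub (by simpa using intable 0 ((19:ℝ)/2) (by norm_num)) ((intable 2 _ (by norm_num)).const_mul 22),
      integral_const_mul]
    simp [Ik]
  rw [h2] at hz
  linarith

private lemma key2 : 3 * Ik 2 = 24 * Ik 4 := by
  have hF : ∀ t ∈ Set.uIcc (-1:ℝ) 1, HasDerivAt (fun t : ℝ => t^3 * (1 - t^2) ^ ((21:ℝ)/2))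
      (3 * (t^2 * (1 - t^2) ^ ((21:ℝ)/2)) - 21 * (t^4 * (1 - t^2) ^ ((19:ℝ)/2))) t := by
    intro t _
    have := (hasDerivAt_pow 3 t).mul (derivRpow (by norm_num : (1:ℝ) ≤ 21/2) t)
    refine this.congr_deriv ?_
    norm_num
    ring
  have hint : IntervalIntegrable (fun t : ℝ => 3 * (t^2 * (1 - t^2) ^ ((21:ℝ)/2)) - 21 * (t^4 * (1 - t^2) ^ ((19:ℝ)/2))) MeasureTheory.volume (-1) 1 :=
    ((intable 2 ((21:ℝ)/2) (by norm_num)).const_mul 3).sub ((intable 4 ((19:ℝ)/2) (by norm_num)).const_mul 21)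
  have h0 := integral_eq_sub_of_hasDerivAt hF hint
  have hz : (∫ t in (-1:ℝ)..1, (3 * (t^2 * (1 - t^2) ^ ((21:ℝ)/2)) - 21 * (t^4 * (1 - t^2) ^ ((19:ℝ)/2)))) = 0 := by
    rw [h0]; norm_num
  have hsplit : (∫ t in (-1:ℝ)..1, (3 * (t^2 * (1 - t^2) ^ ((21:ℝ)/2)) - 21 * (t^4 * (1 - t^2) ^ ((19:ℝ)/2))))
      = (∫ t in (-1:ℝ)..1, (3 * (t^2 * (1 - t^2) ^ ((19:ℝ)/2)) - 24 * (t^4 * (1 - t^2) ^ ((19:ℝ)/2)))) := by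
    apply integral_congr
    intro t ht
    simp only [rpow_split ht]; ring
  rw [hsplit] at hz
  have h2 : (∫ t in (-1:ℝ)..1, (3 * (t^2 * (1 - t^2) ^ ((19:ℝ)/2)) - 24 * (t^4 * (1 - t^2) ^ ((19:ℝ)/2))))
      = 3 * Ik 2 - 24 * Ik 4 := by
    rw [integral_sub ((intable 2 _ (by norm_num)).const_mul 3) ((intable 4 _ (by norm_num)).const_mul 24),
      integral_const_mul, integral_const_mul]
    simp [Ik]
  rw [h2] at hz
  linarith

private lemma geg2 : gegMoment 22 (Polynomial.X^2) = 1/22 := by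
  have he : (((22:ℕ):ℝ) - 3)/2 = 19/2 := by norm_num
  have h2 : Ik 2 ≠ 0 := by
    have := I0_pos; rw [key1] at this; intro h; rw [h] at this; norm_num at this
  unfold gegMoment
  rw [he]
  have hnum : (∫ t in (-1:ℝ)..1, (Polynomial.X^2 : Polynomial ℝ).eval t * (1 - t^2) ^ ((19:ℝ)/2)) = Ik 2 := by
    simp [Ik]
  have hden : (∫ t in (-1:ℝ)..1, (1 - t^2) ^ ((19:ℝ)/2)) = Ik 0 := by
    simp [Ik]
  rw [hnum, hden, key1]
  field_simp

private lemma geg4 : gegMoment 22 (Polynomial.X^4) = 1/176 := by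
  have he : (((22:ℕ):ℝ) - 3)/2 = 19/2 := by norm_num
  have h2 : Ik 2 ≠ 0 := by
    have := I0_pos; rw [key1] at this; intro h; rw [h] at this; norm_num at this
  unfold gegMoment
  rw [he]
  have hnum : (∫ t in (-1:ℝ)..1, (Polynomial.X^4 : Polynomial ℝ).eval t * (1 - t^2) ^ ((19:ℝ)/2)) = Ik 4 := by
    simp [Ik]
  have hden : (∫ t in (-1:ℝ)..1, (1 - t^2) ^ ((19:ℝ)/2)) = Ik 0 := by
    simp [Ik]
  rw [hnum, hden, key1]
  have h4 : Ik 4 = Ik 2 / 8 := by linarith [key2]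
  rw [h4]
  field_simp
  ring

open scoped Classical in
/-- Let `C ⊂ S²¹` be an antipodal spherical 5-design of cardinality 2816 and `ỹ` a unit
vector whose inner products with points of `C` all lie in `{±5/6, ±1/2, ±1/6}` with
frequencies `2γ, 2β, 2α` respectively. Then `γ = 1` is impossible (the design conditions
for `t²` and `t⁴` would force `β = 521/5 ∉ ℤ`), and if `γ = 0` then necessarily
`β = 112` and `α = 1296`. -/
theorem leech_2816_frequencies (C : Finset (EuclideanSpace ℝ (Fin 22)))
    (hcard : C.card = 2816)
    (hdes : IsSphericalDesign 5 C)
    (hant : ∀ z ∈ C, -z ∈ C)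
    (y : EuclideanSpace ℝ (Fin 22)) (hy : ‖y‖ = 1)
    (hval : ∀ z ∈ C, (inner ℝ y z : ℝ) ∈ ({5/6, -5/6, 1/2, -1/2, 1/6, -1/6} : Set ℝ))
    (α β γ : ℕ)
    (hγ : (C.filter fun z => (inner ℝ y z : ℝ) = 5/6 ∨ (inner ℝ y z : ℝ) = -5/6).card = 2 * γ)
    (hβ : (C.filter fun z => (inner ℝ y z : ℝ) = 1/2 ∨ (inner ℝ y z : ℝ) = -1/2).card = 2 * β)
    (hα : (C.filter fun z => (inner ℝ y z : ℝ) = 1/6 ∨ (inner ℝ y z : ℝ) = -1/6).card = 2 * α) :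
    γ ≠ 1 ∧ (γ = 0 → β = 112 ∧ α = 1296) := by
  have hdecomp : ∀ h : EuclideanSpace ℝ (Fin 22) → ℝ,
      (∑ z ∈ C.filter fun z => (inner ℝ y z : ℝ) = 5/6 ∨ (inner ℝ y z : ℝ) = -5/6, h z)
      + (∑ z ∈ C.filter fun z => (inner ℝ y z : ℝ) = 1/2 ∨ (inner ℝ y z : ℝ) = -1/2, h z)
      + (∑ z ∈ C.filter fun z => (inner ℝ y z : ℝ) = 1/6 ∨ (inner ℝ y z : ℝ) = -1/6, h z)
      = ∑ z ∈ C, h z := by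
    intro h
    rw [Finset.sum_filter, Finset.sum_filter, Finset.sum_filter,
      ← Finset.sum_add_distrib, ← Finset.sum_add_distrib]
    apply Finset.sum_congr rfl
    intro z hz
    have hv := hval z hz
    simp only [Set.mem_insert_iff, Set.mem_singleton_iff] at hv
    rcases hv with h1|h1|h1|h1|h1|h1 <;> simp only [h1] <;> norm_num
  have hsumconst : ∀ (s : Finset (EuclideanSpace ℝ (Fin 22))) (v : ℝ) (k : ℕ),
      (∀ z ∈ s, ((inner ℝ y z : ℝ)) ^ k = v) →
      ∑ z ∈ s, ((inner ℝ y z : ℝ)) ^ k = s.card * v := by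
    intro s v k hs
    rw [Finset.sum_congr rfl (fun z hz => hs z hz), Finset.sum_const, nsmul_eq_mul]
  -- design equations
  have hfr : Module.finrank ℝ (EuclideanSpace ℝ (Fin 22)) = 22 := by simp
  have hd2 := hdes.2 (Polynomial.X ^ 2) (by simp) y hy
  have hd4 := hdes.2 (Polynomial.X ^ 4) (by simp) y hy
  rw [hfr, geg2, hcard] at hd2
  rw [hfr, geg4, hcard] at hd4
  simp only [Polynomial.eval_pow, Polynomial.eval_X] at hd2 hd4
  have h2 := hdecomp (fun z => ((inner ℝ y z : ℝ)) ^ 2)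
  have h4 := hdecomp (fun z => ((inner ℝ y z : ℝ)) ^ 4)
  have h0 := hdecomp (fun _ => 1)
  rw [hsumconst _ (25/36) 2 (fun z hz => by
      rcases (Finset.mem_filter.mp hz).2 with h | h <;> rw [h] <;> norm_num),
    hsumconst _ (1/4) 2 (fun z hz => by
      rcases (Finset.mem_filter.mp hz).2 with h | h <;> rw [h] <;> norm_num),
    hsumconst _ (1/36) 2 (fun z hz => by
      rcases (Finset.mem_filter.mp hz).2 with h | h <;> rw [h] <;> norm_num),
    hγ, hβ, hα, hd2] at h2
  rw [hsumconst _ (625/1296) 4 (fun z hz => by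
      rcases (Finset.mem_filter.mp hz).2 with h | h <;> rw [h] <;> norm_num),
    hsumconst _ (1/16) 4 (fun z hz => by
      rcases (Finset.mem_filter.mp hz).2 with h | h <;> rw [h] <;> norm_num),
    hsumconst _ (1/1296) 4 (fun z hz => by
      rcases (Finset.mem_filter.mp hz).2 with h | h <;> rw [h] <;> norm_num),
    hγ, hβ, hα, hd4] at h4
  rw [Finset.sum_const, Finset.sum_const, Finset.sum_const, Finset.sum_const,
    hγ, hβ, hα, hcard] at h0
  simp only [nsmul_eq_mul, mul_one] at h0
  push_cast at h2 h4 h0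
  constructor
  · intro hγ1
    rw [hγ1] at h2 h4
    push_cast at h2 h4
    linarith
  · intro hγ0
    rw [hγ0] at h2 h4
    push_cast at h2 h4
    have hb : (β : ℝ) = 112 := by linarith
    have ha : (α : ℝ) = 1296 := by linarith
    exact ⟨by exact_mod_cast hb, by exact_mod_cast ha⟩
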